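/- The set $\mathbb{N}$ of natural numbers is not a weakly porous subset of $\mathbb{R}$, while $\mathbb{Z}$ is weakly porous in $\mathbb{R}$. In particular, weak porosity is not inherited by subsets. -/

import Mathlib

open MeasureTheory Metric Set

noncomputable section

/-- A half-open interval ("cube") in `ℝ`, given by its left endpoint and length. -/
structure Seg where
  a : ℝ
  l : ℝ
  pos : 0 < l

/-- The set of points of an interval. -/
def Seg.set (P : Seg) : Set ℝ := Set.Ico P.a (P.a + P.l)

/-- `Q` is a dyadic subinterval of `P`. -/
def IsDyadicSubseg (P Q : Seg) : Prop :=
  ∃ j k : ℕ, k < 2 ^ j ∧ Q.l = P.l / 2 ^ j ∧ Q.a = P.a + P.l * k / 2 ^ j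

/-- An interval is `E`-free if it does not meet `E`. -/
def SegFree (E : Set ℝ) (Q : Seg) : Prop := Q.set ∩ E = ∅

/-- The measure `|𝓜(P)|` of a largest `E`-free dyadic subinterval of `P`
(`0` if there is none). -/
def maxFreeR (E : Set ℝ) (P : Seg) : ℝ :=
  sSup {v : ℝ | ∃ Q : Seg, IsDyadicSubseg P Q ∧ SegFree E Q ∧ v = (volume Q.set).toReal}

/-- Weak porosity in `ℝ` with constants `c`, `δ`. -/
def WeaklyPorousWithR (E : Set ℝ) (c δ : ℝ) : Prop :=
  ∀ P : Seg, ∃ (N : ℕ) (Q : Fin N → Seg),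
    (∀ k, IsDyadicSubseg P (Q k) ∧ SegFree E (Q k)) ∧
    (∀ k m, k ≠ m → Disjoint (Q k).set (Q m).set) ∧
    (∀ k, δ * maxFreeR E P ≤ (volume (Q k).set).toReal) ∧
    c * (volume P.set).toReal ≤ ∑ k, (volume (Q k).set).toReal

/-- A subset of `ℝ` is weakly porous. -/
def WeaklyPorousR (E : Set ℝ) : Prop :=
  ∃ c δ : ℝ, 0 < c ∧ c < 1 ∧ 0 < δ ∧ δ < 1 ∧ WeaklyPorousWithR E c δ

/-- A weight on `ℝ`: locally integrable and a.e. positive. -/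
def IsWeightR (w : ℝ → ℝ) : Prop :=
  LocallyIntegrable w volume ∧ ∀ᵐ x : ℝ, 0 < w x

/-- The `A₁` inequality over all intervals, with constant `C`. -/
def A1WithR (w : ℝ → ℝ) (C : ℝ) : Prop :=
  ∀ P : Seg, (⨍ x in P.set, w x) ≤ C * essInf w (volume.restrict P.set)

/-- Membership in `A₁(ℝ)`. -/
def MemA1R (w : ℝ → ℝ) : Prop := IsWeightR w ∧ ∃ C : ℝ, A1WithR w C

/-- The `A_p` inequality over all intervals, with constant `C`. -/
def ApWithR (w : ℝ → ℝ) (p C : ℝ) : Prop :=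
  ∀ P : Seg, (⨍ x in P.set, w x) * (⨍ x in P.set, w x ^ (1 / (1 - p))) ^ (p - 1) ≤ C

/-- Membership in `A_p(ℝ)`. -/
def MemApR (w : ℝ → ℝ) (p : ℝ) : Prop := IsWeightR w ∧ ∃ C : ℝ, ApWithR w p C

/-- `h_E(B(x,R))`: the supremum of radii `t` of balls contained in `B(x,R) \ E`. -/
def hFreeR (E : Set ℝ) (x R : ℝ) : ℝ :=
  sSup {t : ℝ | ∃ y ∈ ball x R, ball y t ⊆ ball x R \ E}

/-- The set of admissible exponents for the Muckenhoupt exponent. -/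
def MuckSetR (E : Set ℝ) : Set ℝ :=
  {α : ℝ | ∃ C : ℝ, ∀ x ∈ E, ∀ R r : ℝ, 0 < r → r < hFreeR E x R → hFreeR E x R ≤ R →
    (volume (thickening r E ∩ ball x R)).toReal ≤
      C * (hFreeR E x R / r) ^ (-α) * (volume (ball x R)).toReal}

open scoped Classical in
/-- The Muckenhoupt exponent of `E ⊆ ℝ`. -/
def MuckExpR (E : Set ℝ) : ℝ :=
  if ∀ x ∈ E, ∀ R : ℝ, 0 < R → 0 < hFreeR E x R then sSup (MuckSetR E) else 0

end

/-! `ℕ` fails because of its unbounded gap `(-∞, 0)`: in `P = [-s, (2ʲ - 1)s)` the dyadic child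
`[-s, 0)` is `ℕ`-free, so `|𝓜(P)| ≥ s`. With `s = 2/δ` every admissible subinterval is longer than
`1`, hence avoids `ℕ` only inside `[-s, 0)`, and together they cover at most `2⁻ʲ|P| < c|P|`.

For `ℤ`, an `ℤ`-free interval has length at most `1`, so `|𝓜(P)| ≤ min(|P|, 1)`. Cut `P` into dyadic
tiles of length `t ∈ [min(|P|, 1)/8, min(|P|, 1)/4)`: distinct tiles meeting `ℤ` contain distinct
integers of `P`, so at most `|P| + 1` of them do, and the others cover at least `|P|/2`. -/

namespace Seg

lemma volume_set_toReal (P : Seg) : (volume P.set).toReal = P.l := by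
  rw [Seg.set, Real.volume_Ico, add_sub_cancel_left, ENNReal.toReal_ofReal P.pos.le]

lemma volume_set_lt_top (P : Seg) : volume P.set < ⊤ :=
  measure_Ico_lt_top

noncomputable def dyadic (P : Seg) (j k : ℕ) : Seg :=
  ⟨P.a + P.l * k / 2 ^ j, P.l / 2 ^ j, div_pos P.pos (by positivity)⟩

lemma isDyadicSubseg_dyadic (P : Seg) {j k : ℕ} (hk : k < 2 ^ j) :
    IsDyadicSubseg P (P.dyadic j k) :=
  ⟨j, k, hk, rfl, rfl⟩

lemma disjoint_dyadic_set (P : Seg) (j : ℕ) {k k' : ℕ} (h : k ≠ k') :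
    Disjoint (P.dyadic j k).set (P.dyadic j k').set := by
  wlog hlt : k < k' generalizing k k'
  · exact (this h.symm (h.lt_or_gt.resolve_left hlt)).symm
  refine (Set.Iio_disjoint_Ici ?_).mono Set.Ico_subset_Iio_self Set.Ico_subset_Ici_self
  have hk : (k : ℝ) + 1 ≤ k' := by exact_mod_cast hlt
  have hP := P.pos
  simp only [dyadic]
  rw [add_assoc, ← add_div, ← mul_add_one]
  gcongr

open scoped Classical in
noncomputable def freeDyadic (E : Set ℝ) (P : Seg) (j : ℕ) : Finset ℕ :=
  (Finset.range (2 ^ j)).filter fun k => SegFree E (P.dyadic j k)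

lemma mem_freeDyadic {E : Set ℝ} {P : Seg} {j k : ℕ} :
    k ∈ P.freeDyadic E j ↔ k < 2 ^ j ∧ SegFree E (P.dyadic j k) := by
  simp only [freeDyadic, Finset.mem_filter, Finset.mem_range]

end Seg

namespace IsDyadicSubseg

variable {P Q : Seg}

lemma l_le (h : IsDyadicSubseg P Q) : Q.l ≤ P.l := by
  obtain ⟨j, k, -, hl, -⟩ := h
  rw [hl]
  exact div_le_self P.pos.le (one_le_pow₀ one_le_two)

lemma set_subset (h : IsDyadicSubseg P Q) : Q.set ⊆ P.set := by
  obtain ⟨j, k, hk, hl, ha⟩ := h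
  have hk' : (k : ℝ) + 1 ≤ 2 ^ j := by exact_mod_cast hk
  have hP := P.pos
  apply Set.Ico_subset_Ico
  · rw [ha]
    exact le_add_of_nonneg_right (by positivity)
  · rw [ha, hl, add_assoc, ← add_div, ← mul_add_one]
    gcongr
    rw [div_le_iff₀ (by positivity)]
    gcongr

end IsDyadicSubseg

lemma le_maxFreeR {E : Set ℝ} {P Q : Seg} (hQ : IsDyadicSubseg P Q) (hfree : SegFree E Q) :
    Q.l ≤ maxFreeR E P := by
  refine le_csSup ⟨P.l, ?_⟩ ⟨Q, hQ, hfree, Q.volume_set_toReal.symm⟩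
  rintro _ ⟨Q', hQ', -, rfl⟩
  rw [Seg.volume_set_toReal]
  exact hQ'.l_le

lemma maxFreeR_le {E : Set ℝ} {P : Seg} {b : ℝ} (hb : 0 ≤ b)
    (h : ∀ Q, IsDyadicSubseg P Q → SegFree E Q → Q.l ≤ b) : maxFreeR E P ≤ b := by
  refine Real.sSup_le ?_ hb
  rintro _ ⟨Q, hQ, hfree, rfl⟩
  rw [Seg.volume_set_toReal]
  exact h Q hQ hfree

lemma sum_l_le_of_pairwiseDisjoint {ι : Type*} [Fintype ι] {Q : ι → Seg} {S : Set ℝ}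
    (hdisj : Pairwise fun k k' => Disjoint (Q k).set (Q k').set) (hS : ∀ k, (Q k).set ⊆ S)
    (hSfin : volume S ≠ ⊤) : ∑ k, (Q k).l ≤ (volume S).toReal := by
  have hunion : volume (⋃ k, (Q k).set) = ∑ k, volume (Q k).set := by
    rw [measure_iUnion hdisj fun _ => measurableSet_Ico, tsum_fintype]
  calc ∑ k, (Q k).l = (volume (⋃ k, (Q k).set)).toReal := by
        rw [hunion, ENNReal.toReal_sum fun k _ => (Q k).volume_set_lt_top.ne]
        simp only [Seg.volume_set_toReal]
    _ ≤ (volume S).toReal := ENNReal.toReal_mono hSfin (measure_mono (Set.iUnion_subset hS))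

lemma weaklyPorousWithR_of_freeDyadic {E : Set ℝ} {c δ : ℝ}
    (h : ∀ P : Seg, ∃ j : ℕ, δ * maxFreeR E P ≤ P.l / 2 ^ j ∧
      c * P.l ≤ (P.freeDyadic E j).card * (P.l / 2 ^ j)) :
    WeaklyPorousWithR E c δ := by
  intro P
  obtain ⟨j, hδ, hc⟩ := h P
  set S := P.freeDyadic E j
  let k : Fin S.card → ℕ := fun i => S.equivFin.symm i
  have hk : ∀ i, k i < 2 ^ j ∧ SegFree E (P.dyadic j (k i)) := fun i =>
    Seg.mem_freeDyadic.1 (S.equivFin.symm i).2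
  refine ⟨S.card, fun i => P.dyadic j (k i), fun i => ⟨P.isDyadicSubseg_dyadic (hk i).1, (hk i).2⟩,
    fun i i' hii' => P.disjoint_dyadic_set j ?_, fun i => ?_, ?_⟩
  · exact fun h => hii' (S.equivFin.symm.injective (Subtype.ext h))
  · rwa [Seg.volume_set_toReal]
  · simp only [Seg.volume_set_toReal]
    simpa only [Seg.dyadic, Finset.sum_const, Finset.card_univ, Fintype.card_fin, nsmul_eq_mul]
      using hc

lemma exists_div_two_pow_mem_Ico {l m : ℝ} (hm : 0 < m) (hml : m ≤ l) :
    ∃ j : ℕ, m / 2 ≤ l / 2 ^ j ∧ l / 2 ^ j < m := by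
  obtain ⟨n, hlo, hhi⟩ := exists_nat_pow_near ((one_le_div hm).2 hml) one_lt_two
  rw [le_div_iff₀ hm] at hlo
  rw [div_lt_iff₀ hm] at hhi
  refine ⟨n + 1, ?_, ?_⟩
  · rw [pow_succ, div_le_div_iff₀ two_pos (by positivity)]
    nlinarith
  · rw [div_lt_iff₀ (by positivity)]
    linarith

lemma Seg.ceil_mem_set_of_not_segFree_int {Q : Seg} (h : ¬ SegFree {x : ℝ | ∃ m : ℤ, x = m} Q) :
    ((⌈Q.a⌉ : ℤ) : ℝ) ∈ Q.set := by
  obtain ⟨_, ⟨hlo, hhi⟩, m, rfl⟩ := Set.nonempty_iff_ne_empty.2 h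
  exact ⟨Int.le_ceil _, lt_of_le_of_lt (by exact_mod_cast Int.ceil_le.2 hlo) hhi⟩

lemma Seg.l_le_one_of_segFree_int {Q : Seg} (h : SegFree {x : ℝ | ∃ m : ℤ, x = m} Q) :
    Q.l ≤ 1 := by
  by_contra! hl
  refine Set.eq_empty_iff_forall_notMem.1 h ⌈Q.a⌉ ⟨⟨Int.le_ceil _, ?_⟩, _, rfl⟩
  linarith [Int.ceil_lt_add_one Q.a]

lemma maxFreeR_int_le (P : Seg) : maxFreeR {x : ℝ | ∃ m : ℤ, x = m} P ≤ min P.l 1 :=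
  maxFreeR_le (le_min P.pos.le zero_le_one) fun _ hQ hfree =>
    le_min hQ.l_le (Seg.l_le_one_of_segFree_int hfree)

lemma Int.card_Ico_ceil_le {x y : ℝ} (hxy : x ≤ y) : ((Finset.Ico ⌈x⌉ ⌈y⌉).card : ℝ) ≤ y - x + 1 := by
  have hle : ⌈x⌉ ≤ ⌈y⌉ := Int.ceil_le_ceil hxy
  rw [Int.card_Ico, ← Int.cast_natCast, Int.toNat_of_nonneg (sub_nonneg.2 hle), Int.cast_sub]
  linarith [Int.ceil_lt_add_one y, Int.le_ceil x]

lemma two_pow_sub_le_card_freeDyadic_int (P : Seg) (j : ℕ) :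
    2 ^ j - (P.l + 1) ≤ (P.freeDyadic {x : ℝ | ∃ m : ℤ, x = m} j).card := by
  classical
  set B := (Finset.range (2 ^ j)).filter fun k =>
    ¬ SegFree {x : ℝ | ∃ m : ℤ, x = m} (P.dyadic j k)
  have hsplit : (P.freeDyadic {x : ℝ | ∃ m : ℤ, x = m} j).card + B.card = 2 ^ j := by
    rw [Seg.freeDyadic, Finset.card_filter_add_card_filter_not, Finset.card_range]
  have hmem : ∀ k ∈ B, ((⌈(P.dyadic j k).a⌉ : ℤ) : ℝ) ∈ (P.dyadic j k).set := fun k hk =>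
    Seg.ceil_mem_set_of_not_segFree_int (Finset.mem_filter.1 hk).2
  have hmaps : Set.MapsTo (fun k => ⌈(P.dyadic j k).a⌉) B (Finset.Ico ⌈P.a⌉ ⌈P.a + P.l⌉) := by
    intro k hk
    have hkj := Finset.mem_range.1 (Finset.mem_filter.1 hk).1
    obtain ⟨hlo, hhi⟩ := (P.isDyadicSubseg_dyadic hkj).set_subset (hmem k hk)
    exact Finset.mem_Ico.2 ⟨Int.ceil_le.2 hlo, Int.lt_ceil.2 hhi⟩
  have hinj : Set.InjOn (fun k => ⌈(P.dyadic j k).a⌉) B := by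
    intro k hk k' hk' heq
    by_contra hne
    have hk'mem := hmem k' hk'
    rw [← show ⌈(P.dyadic j k).a⌉ = ⌈(P.dyadic j k').a⌉ from heq] at hk'mem
    exact Set.disjoint_left.1 (P.disjoint_dyadic_set j hne) (hmem k hk) hk'mem
  have hbad : (B.card : ℝ) ≤ P.l + 1 :=
    calc (B.card : ℝ) ≤ (Finset.Ico ⌈P.a⌉ ⌈P.a + P.l⌉).card := by
          exact_mod_cast Finset.card_le_card_of_injOn _ hmaps hinj
      _ ≤ P.l + 1 := by
          simpa using Int.card_Ico_ceil_le (le_add_of_nonneg_right P.pos.le)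
  have hsplit' : ((P.freeDyadic {x : ℝ | ∃ m : ℤ, x = m} j).card : ℝ) + B.card = 2 ^ j := by
    exact_mod_cast hsplit
  linarith

lemma add_one_mul_min_one_le {l : ℝ} (hl : 0 ≤ l) : (l + 1) * min l 1 ≤ 2 * l := by
  rcases le_total l 1 with h | h
  · rw [min_eq_left h]
    nlinarith
  · rw [min_eq_right h]
    linarith

theorem weaklyPorousR_int : WeaklyPorousR {x : ℝ | ∃ m : ℤ, x = m} := by
  refine ⟨1 / 2, 1 / 8, by norm_num, by norm_num, by norm_num, by norm_num,
    weaklyPorousWithR_of_freeDyadic fun P => ?_⟩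
  have hm : 0 < min P.l 1 := lt_min P.pos one_pos
  obtain ⟨j, hlo, hhi⟩ := exists_div_two_pow_mem_Ico (l := P.l) (m := min P.l 1 / 4)
    (by positivity) (by linarith [min_le_left P.l 1])
  set t := P.l / 2 ^ j
  have hlt : 2 ^ j * t = P.l := mul_div_cancel₀ _ (by positivity)
  refine ⟨j, ?_, ?_⟩
  · calc 1 / 8 * maxFreeR _ P ≤ 1 / 8 * min P.l 1 := by gcongr; exact maxFreeR_int_le P
      _ ≤ t := by linarith
  · have hl := P.pos
    calc 1 / 2 * P.l ≤ P.l - (P.l + 1) * (min P.l 1 / 4) := by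
          linarith [add_one_mul_min_one_le P.pos.le]
      _ ≤ P.l - (P.l + 1) * t := by gcongr
      _ = (2 ^ j - (P.l + 1)) * t := by rw [sub_mul, hlt]
      _ ≤ _ := by gcongr; exact two_pow_sub_le_card_freeDyadic_int P j

lemma Seg.add_l_nonpos_of_segFree_nat {Q : Seg} (hfree : SegFree {x : ℝ | ∃ m : ℕ, x = m} Q)
    (hl : 1 < Q.l) : Q.a + Q.l ≤ 0 := by
  by_contra! hpos
  refine Set.eq_empty_iff_forall_notMem.1 hfree (⌈Q.a⌉₊ : ℝ) ⟨⟨Nat.le_ceil _, ?_⟩, _, rfl⟩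
  rcases le_or_gt Q.a 0 with ha | ha
  · rwa [Nat.ceil_eq_zero.2 ha, Nat.cast_zero]
  · linarith [Nat.ceil_lt_add_one ha.le]

theorem not_weaklyPorousR_nat : ¬ WeaklyPorousR {x : ℝ | ∃ m : ℕ, x = m} := by
  rintro ⟨c, δ, hc, -, hδ, -, hW⟩
  obtain ⟨j, hj⟩ := pow_unbounded_of_one_lt c⁻¹ one_lt_two
  rw [inv_lt_iff_one_lt_mul₀ hc] at hj
  set s := 2 / δ
  have hs : 0 < s := by positivity
  let P : Seg := ⟨-s, 2 ^ j * s, by positivity⟩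
  have hM : s ≤ maxFreeR {x : ℝ | ∃ m : ℕ, x = m} P := by
    refine le_maxFreeR (Q := ⟨-s, s, hs⟩) ⟨j, 0, by positivity, by simp [P], by simp [P]⟩ ?_
    refine Set.eq_empty_iff_forall_notMem.2 ?_
    rintro _ ⟨⟨-, hx⟩, m, rfl⟩
    linarith [m.cast_nonneg (α := ℝ)]
  obtain ⟨N, Q, hQ, hdisj, hlow, hsum⟩ := hW P
  have hlong : ∀ k, 1 < (Q k).l := fun k =>
    calc 1 < δ * s := by rw [mul_div_cancel₀ _ hδ.ne']; norm_num
      _ ≤ δ * maxFreeR _ P := by gcongr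
      _ ≤ (Q k).l := by simpa only [Seg.volume_set_toReal] using hlow k
  have hsub : ∀ k, (Q k).set ⊆ Set.Ico (-s) 0 := fun k x hx =>
    ⟨((hQ k).1.set_subset hx).1,
      hx.2.trans_le (Seg.add_l_nonpos_of_segFree_nat (hQ k).2 (hlong k))⟩
  have hcover := sum_l_le_of_pairwiseDisjoint (fun k m h => hdisj k m h) hsub
    measure_Ico_lt_top.ne
  rw [Real.volume_Ico, zero_sub, neg_neg, ENNReal.toReal_ofReal hs.le] at hcover
  simp only [Seg.volume_set_toReal] at hsum
  have hcP : s < c * P.l := by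
    calc s = 1 * s := (one_mul s).symm
      _ < (2 ^ j * c) * s := by gcongr
      _ = c * P.l := by ring
  linarith

/-- `ℤ` is a weakly porous subset of `ℝ`, `ℕ ⊆ ℤ` is not weakly porous;
in particular weak porosity is not inherited by subsets. -/
theorem int_weaklyPorous_nat_not :
    WeaklyPorousR {x : ℝ | ∃ m : ℤ, x = (m : ℝ)} ∧
    ¬ WeaklyPorousR {x : ℝ | ∃ m : ℕ, x = (m : ℝ)} ∧
    {x : ℝ | ∃ m : ℕ, x = (m : ℝ)} ⊆ {x : ℝ | ∃ m : ℤ, x = (m : ℝ)} :=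
  ⟨weaklyPorousR_int, not_weaklyPorousR_nat, fun _ ⟨m, hm⟩ => ⟨m, by simp [hm]⟩⟩
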